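/- arXiv:2507.15722 — 3 statements merged into one kernel-verified Lean document; each statement's English description precedes it below -/
import Mathlib

section
/- Let A > 1, κ > 1, C > 0 and i ∈ ℕ with i ≥ 1. Then the product over j = 1,…,i of A^{j·κ^{i-j+1}/(C(κ^i - 1))} is at most A^{κ²/(C(κ-1)²)}. -/
/-!
The product collapses to `A` raised to `∑ j κ^(i-j+1) / (C (κ^i - 1))`, and this arithmetico-geometric
sum has the closed form `(κ - 1)² ∑ j κ^(i-j+1) = κ² (κ^i - 1) - i κ (κ - 1)`, so the exponent is at
most `κ² / (C (κ - 1)²)`.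
-/

open Finset

theorem sub_one_sq_mul_sum_Icc_mul_pow {R : Type*} [CommRing R] (κ : R) (i : ℕ) :
    (κ - 1) ^ 2 * ∑ j ∈ Icc 1 i, (j : R) * κ ^ (i - j + 1)
      = κ ^ 2 * (κ ^ i - 1) - i * κ * (κ - 1) := by
  induction i with
  | zero => simp
  | succ n ih =>
    have hshift : ∑ j ∈ Icc 1 n, (j : R) * κ ^ (n + 1 - j + 1)
        = κ * ∑ j ∈ Icc 1 n, (j : R) * κ ^ (n - j + 1) := by
      rw [mul_sum]
      refine sum_congr rfl fun j hj => ?_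
      rw [show n + 1 - j + 1 = n - j + 1 + 1 by grind, pow_succ]
      ring
    rw [sum_Icc_succ_top (by omega), hshift, Nat.sub_self, mul_add, mul_left_comm, ih]
    push_cast
    ring

theorem sum_Icc_mul_pow_div_le {κ : ℝ} (hκ : 1 < κ) (i : ℕ) :
    (∑ j ∈ Icc 1 i, (j : ℝ) * κ ^ (i - j + 1)) / (κ ^ i - 1) ≤ κ ^ 2 / (κ - 1) ^ 2 := by
  have hκ0 : 0 < (κ - 1) ^ 2 := by nlinarith
  have hκi : 0 ≤ κ ^ i - 1 := by linarith [one_le_pow₀ (n := i) hκ.le]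
  refine div_le_of_le_mul₀ hκi (by positivity) ?_
  rw [div_mul_eq_mul_div, le_div_iff₀ hκ0, mul_comm, sub_one_sq_mul_sum_Icc_mul_pow]
  have : 0 ≤ (i : ℝ) * κ * (κ - 1) := by positivity
  linarith

theorem stmt_1_general (A κ C : ℝ) (hA : 1 < A) (hκ : 1 < κ) (hC : 0 < C)
    (i : ℕ) :
    ∏ j ∈ Finset.Icc 1 i, A ^ ((j : ℝ) * κ ^ (i - j + 1) / (C * (κ ^ i - 1)))
      ≤ A ^ (κ ^ 2 / (C * (κ - 1) ^ 2)) := by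
  rw [← Real.rpow_sum_of_pos (by linarith), ← sum_div, mul_comm C, mul_comm C,
    ← div_div, ← div_div]
  exact Real.rpow_le_rpow_of_exponent_le hA.le
    (div_le_div_of_nonneg_right (sum_Icc_mul_pow_div_le hκ i) hC.le)

theorem stmt_1 (A κ C : ℝ) (hA : 1 < A) (hκ : 1 < κ) (hC : 0 < C)
    (i : ℕ) (hi : 1 ≤ i) :
    ∏ j ∈ Finset.Icc 1 i, A ^ ((j : ℝ) * κ ^ (i - j + 1) / (C * (κ ^ i - 1)))
      ≤ A ^ (κ ^ 2 / (C * (κ - 1) ^ 2)) :=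
  stmt_1_general A κ C hA hκ hC i
end

section
/- Let μ ∈ (0,1] and p > 1. For any vectors ξ, η ∈ ℝ^{Nk} one has |(μ² + |ξ|²)^{(p-2)/2}ξ − (μ² + |η|²)^{(p-2)/2}η| ≤ C·(μ² + |ξ|² + |η|²)^{(p-2)/2}·|ξ − η| for a constant C = C(p) > 0. -/
/-!
Write `V(x) = (μ² + ‖x‖²)^q x` with `q = (p - 2) / 2` and `S = μ² + ‖ξ‖² + ‖η‖²`. The derivative
of `V` at `ζ` has norm at most `(1 + 2|q|)(μ² + ‖ζ‖²)^q`, so by the mean value inequality it suffices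
that `μ² + ‖ζ‖²` is comparable to `S` along the segment `[ξ, η]`. This holds when `‖ξ - η‖` is at most
half of `m = max ‖ξ‖ ‖η‖` (the segment stays at distance `m / 2` from the origin) or when `m ≤ μ`.
Otherwise `μ < m < 2‖ξ - η‖`, and the triangle inequality suffices: since `q + 1/2 ≥ 0`, i.e. `p ≥ 1`,
`‖V(ζ)‖ ≤ (μ² + ‖ζ‖²)^(q + 1/2) ≤ (μ² + m²)^(q + 1/2) ≤ 2m (μ² + m²)^q`.
-/

open scoped RealInnerProductSpace

section

variable {E : Type*} [NormedAddCommGroup E] [InnerProductSpace ℝ E]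

noncomputable def regPowerField (μ q : ℝ) (x : E) : E := (μ ^ 2 + ‖x‖ ^ 2) ^ q • x

noncomputable def regPowerFieldDeriv (μ q : ℝ) (x : E) : E →L[ℝ] E :=
  (μ ^ 2 + ‖x‖ ^ 2) ^ q • ContinuousLinearMap.id ℝ E +
    (2 * q * (μ ^ 2 + ‖x‖ ^ 2) ^ (q - 1)) • (innerSL ℝ x).smulRight x

variable {μ q : ℝ}

theorem hasFDerivAt_regPowerField (hμ : μ ≠ 0) (x : E) :
    HasFDerivAt (regPowerField μ q) (regPowerFieldDeriv μ q x) x := by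
  have hpos : 0 < μ ^ 2 + ‖x‖ ^ 2 := by positivity
  have hnorm : HasFDerivAt (fun y : E => μ ^ 2 + ‖y‖ ^ 2) (2 • innerSL ℝ x) x :=
    (hasStrictFDerivAt_norm_sq x).hasFDerivAt.const_add _
  refine ((hnorm.rpow_const (p := q) (Or.inl hpos.ne')).smul (hasFDerivAt_id x)).congr_fderiv ?_
  ext v
  simp only [regPowerFieldDeriv, id_eq, add_apply, smul_apply,
    ContinuousLinearMap.id_apply, ContinuousLinearMap.smulRight_apply, coe_innerSL_apply,
    nsmul_eq_mul, Nat.cast_ofNat, smul_eq_mul, add_right_inj]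
  rw [smul_smul]
  congr 1
  ring

theorem norm_regPowerFieldDeriv_le (hμ : μ ≠ 0) (x : E) :
    ‖regPowerFieldDeriv μ q x‖ ≤ (1 + 2 * |q|) * (μ ^ 2 + ‖x‖ ^ 2) ^ q := by
  set t := μ ^ 2 + ‖x‖ ^ 2
  have ht : 0 < t := by positivity
  have hx : ‖x‖ ^ 2 ≤ t := by simp only [t]; nlinarith
  have hcorr : |2 * q * t ^ (q - 1)| * ‖x‖ ^ 2 ≤ 2 * |q| * t ^ q := by
    rw [abs_mul, abs_mul, abs_two, abs_of_pos (Real.rpow_pos_of_pos ht _)]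
    calc 2 * |q| * t ^ (q - 1) * ‖x‖ ^ 2 ≤ 2 * |q| * t ^ (q - 1) * t := by gcongr
      _ = 2 * |q| * t ^ q := by rw [Real.rpow_sub_one ht.ne']; field_simp
  refine ContinuousLinearMap.opNorm_le_bound _ (by positivity) fun v => ?_
  have hv : regPowerFieldDeriv μ q x v = t ^ q • v + (2 * q * t ^ (q - 1) * ⟪x, v⟫) • x := by
    simp [regPowerFieldDeriv, t, smul_smul]
  rw [hv]
  calc ‖t ^ q • v + (2 * q * t ^ (q - 1) * ⟪x, v⟫) • x‖
      ≤ t ^ q * ‖v‖ + |2 * q * t ^ (q - 1)| * (‖x‖ * ‖v‖) * ‖x‖ := by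
        refine (norm_add_le _ _).trans (add_le_add ?_ ?_)
        · rw [norm_smul, Real.norm_of_nonneg (by positivity)]
        · rw [norm_smul, Real.norm_eq_abs, abs_mul]
          gcongr
          exact abs_real_inner_le_norm x v
    _ = t ^ q * ‖v‖ + |2 * q * t ^ (q - 1)| * ‖x‖ ^ 2 * ‖v‖ := by ring
    _ ≤ t ^ q * ‖v‖ + 2 * |q| * t ^ q * ‖v‖ := by gcongr
    _ = (1 + 2 * |q|) * t ^ q * ‖v‖ := by ring

theorem norm_regPowerField_sub_le_of_forall_mem_segment (hμ : μ ≠ 0) {ξ η : E} {M : ℝ}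
    (hM : ∀ ζ ∈ segment ℝ ξ η, (μ ^ 2 + ‖ζ‖ ^ 2) ^ q ≤ M) :
    ‖regPowerField μ q ξ - regPowerField μ q η‖ ≤ (1 + 2 * |q|) * M * ‖ξ - η‖ :=
  (convex_segment ξ η).norm_image_sub_le_of_norm_hasFDerivWithin_le
    (fun ζ _ => (hasFDerivAt_regPowerField hμ ζ).hasFDerivWithinAt)
    (fun ζ hζ => (norm_regPowerFieldDeriv_le hμ ζ).trans (by gcongr; exact hM ζ hζ))
    (right_mem_segment ℝ ξ η) (left_mem_segment ℝ ξ η)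

theorem Real.rpow_le_rpow_abs_mul_rpow_of_div_le_of_le {S t c : ℝ} (q : ℝ) (hS : 0 < S)
    (hc : 1 ≤ c) (hlo : S / c ≤ t) (hhi : t ≤ S) : t ^ q ≤ c ^ |q| * S ^ q := by
  have hc₀ : 0 < c := by linarith
  rcases le_total 0 q with hq | hq
  · calc t ^ q ≤ S ^ q := Real.rpow_le_rpow ((div_pos hS hc₀).le.trans hlo) hhi hq
      _ ≤ c ^ |q| * S ^ q :=
        le_mul_of_one_le_left (by positivity) (Real.one_le_rpow hc (abs_nonneg q))
  · calc t ^ q ≤ (S / c) ^ q := Real.rpow_le_rpow_of_nonpos (div_pos hS hc₀) hlo hq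
      _ = c ^ |q| * S ^ q := by
        rw [Real.div_rpow hS.le hc₀.le, abs_of_nonpos hq, Real.rpow_neg hc₀.le, div_eq_inv_mul]

theorem norm_le_max_of_mem_segment {ξ η ζ : E} (hζ : ζ ∈ segment ℝ ξ η) :
    ‖ζ‖ ≤ max ‖ξ‖ ‖η‖ := by
  simpa using (convex_closedBall (0 : E) (max ‖ξ‖ ‖η‖)).segment_subset
    (by simp) (by simp) hζ

theorem max_norm_sub_le_norm_of_mem_segment {ξ η ζ : E} (hζ : ζ ∈ segment ℝ ξ η) :
    max ‖ξ‖ ‖η‖ - ‖ξ - η‖ ≤ ‖ζ‖ := by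
  have hξ := segment_subset_closedBall_left ξ η hζ
  have hη := segment_subset_closedBall_right ξ η hζ
  rw [Metric.mem_closedBall, dist_eq_norm, dist_eq_norm] at hξ hη
  rw [sub_le_iff_le_add, max_le_iff]
  constructor
  · linarith [norm_le_norm_add_norm_sub ζ ξ]
  · linarith [norm_le_norm_add_norm_sub ζ η]

theorem rpow_le_of_mem_segment_of_close (hμ : 0 < μ) {ξ η ζ : E}
    (hclose : 2 * ‖ξ - η‖ ≤ max ‖ξ‖ ‖η‖ ∨ max ‖ξ‖ ‖η‖ ≤ μ) (hζ : ζ ∈ segment ℝ ξ η) :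
    (μ ^ 2 + ‖ζ‖ ^ 2) ^ q ≤ 8 ^ |q| * (μ ^ 2 + ‖ξ‖ ^ 2 + ‖η‖ ^ 2) ^ q := by
  set m := max ‖ξ‖ ‖η‖
  have hm : 0 ≤ m := (norm_nonneg ξ).trans (le_max_left _ _)
  have hsum : ‖ξ‖ ^ 2 + ‖η‖ ^ 2 ≤ 2 * m ^ 2 := by
    have := pow_le_pow_left₀ (norm_nonneg ξ) (le_max_left ‖ξ‖ ‖η‖) 2
    have := pow_le_pow_left₀ (norm_nonneg η) (le_max_right ‖ξ‖ ‖η‖) 2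
    linarith
  have hmax : m ^ 2 ≤ ‖ξ‖ ^ 2 + ‖η‖ ^ 2 := by
    rcases max_cases ‖ξ‖ ‖η‖ with ⟨h, _⟩ | ⟨h, _⟩ <;> simp only [m, h] <;> nlinarith
  have hup : ‖ζ‖ ^ 2 ≤ m ^ 2 := pow_le_pow_left₀ (norm_nonneg ζ) (norm_le_max_of_mem_segment hζ) 2
  have hlo : 2 * m ^ 2 ≤ 8 * ‖ζ‖ ^ 2 ∨ m ≤ μ := by
    refine hclose.imp_left fun h => ?_
    have := max_norm_sub_le_norm_of_mem_segment hζ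
    nlinarith
  refine Real.rpow_le_rpow_abs_mul_rpow_of_div_le_of_le q (by positivity) (by norm_num) ?_ ?_
  · rcases hlo with h | h
    · linarith [sq_nonneg μ]
    · nlinarith [sq_nonneg ‖ζ‖]
  · linarith

theorem norm_regPowerField_sub_le_of_close (hμ : 0 < μ) {ξ η : E}
    (hclose : 2 * ‖ξ - η‖ ≤ max ‖ξ‖ ‖η‖ ∨ max ‖ξ‖ ‖η‖ ≤ μ) :
    ‖regPowerField μ q ξ - regPowerField μ q η‖ ≤
      (1 + 2 * |q|) * 8 ^ |q| * (μ ^ 2 + ‖ξ‖ ^ 2 + ‖η‖ ^ 2) ^ q * ‖ξ - η‖ := by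
  rw [mul_assoc (1 + 2 * |q|)]
  exact norm_regPowerField_sub_le_of_forall_mem_segment hμ.ne'
    fun ζ hζ => rpow_le_of_mem_segment_of_close hμ hclose hζ

theorem norm_regPowerField_le (hq : -1 / 2 ≤ q) (hμ : 0 < μ) {m : ℝ} (hμm : μ ≤ m) {ζ : E}
    (hζ : ‖ζ‖ ≤ m) : ‖regPowerField μ q ζ‖ ≤ 2 * m * (μ ^ 2 + m ^ 2) ^ q := by
  have ht : 0 < μ ^ 2 + ‖ζ‖ ^ 2 := by positivity
  have hT : 0 < μ ^ 2 + m ^ 2 := by positivity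
  have hζm : ‖ζ‖ ^ 2 ≤ m ^ 2 := pow_le_pow_left₀ (norm_nonneg ζ) hζ 2
  have hζt : ‖ζ‖ ≤ √(μ ^ 2 + ‖ζ‖ ^ 2) :=
    (Real.le_sqrt (norm_nonneg ζ) ht.le).2 (by nlinarith)
  have hTm : √(μ ^ 2 + m ^ 2) ≤ 2 * m :=
    Real.sqrt_le_iff.2 ⟨by linarith, by nlinarith⟩
  calc ‖regPowerField μ q ζ‖ = (μ ^ 2 + ‖ζ‖ ^ 2) ^ q * ‖ζ‖ := by
        rw [regPowerField, norm_smul, Real.norm_of_nonneg (by positivity)]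
    _ ≤ (μ ^ 2 + ‖ζ‖ ^ 2) ^ q * √(μ ^ 2 + ‖ζ‖ ^ 2) := by gcongr
    _ = (μ ^ 2 + ‖ζ‖ ^ 2) ^ (q + 1 / 2) := by rw [Real.sqrt_eq_rpow, Real.rpow_add ht]
    _ ≤ (μ ^ 2 + m ^ 2) ^ (q + 1 / 2) := Real.rpow_le_rpow ht.le (by linarith) (by linarith)
    _ = (μ ^ 2 + m ^ 2) ^ q * √(μ ^ 2 + m ^ 2) := by rw [Real.sqrt_eq_rpow, Real.rpow_add hT]
    _ ≤ 2 * m * (μ ^ 2 + m ^ 2) ^ q := by rw [mul_comm (2 * m)]; gcongr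

theorem norm_regPowerField_sub_le_of_far (hq : -1 / 2 ≤ q) (hμ : 0 < μ) {ξ η : E}
    (hfar : max ‖ξ‖ ‖η‖ < 2 * ‖ξ - η‖) (hμm : μ < max ‖ξ‖ ‖η‖) :
    ‖regPowerField μ q ξ - regPowerField μ q η‖ ≤
      8 * 2 ^ |q| * (μ ^ 2 + ‖ξ‖ ^ 2 + ‖η‖ ^ 2) ^ q * ‖ξ - η‖ := by
  set m := max ‖ξ‖ ‖η‖
  set S := μ ^ 2 + ‖ξ‖ ^ 2 + ‖η‖ ^ 2
  have hm : 0 ≤ m := hμ.le.trans hμm.le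
  have hT : (μ ^ 2 + m ^ 2) ^ q ≤ 2 ^ |q| * S ^ q := by
    have := pow_le_pow_left₀ (norm_nonneg ξ) (le_max_left ‖ξ‖ ‖η‖) 2
    have := pow_le_pow_left₀ (norm_nonneg η) (le_max_right ‖ξ‖ ‖η‖) 2
    refine Real.rpow_le_rpow_abs_mul_rpow_of_div_le_of_le q (by positivity) one_le_two ?_ ?_
    · linarith [sq_nonneg μ]
    · rcases max_cases ‖ξ‖ ‖η‖ with ⟨h, _⟩ | ⟨h, _⟩ <;> simp only [S, m, h] <;> nlinarith
  calc ‖regPowerField μ q ξ - regPowerField μ q η‖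
      ≤ ‖regPowerField μ q ξ‖ + ‖regPowerField μ q η‖ := norm_sub_le _ _
    _ ≤ 2 * m * (μ ^ 2 + m ^ 2) ^ q + 2 * m * (μ ^ 2 + m ^ 2) ^ q :=
      add_le_add (norm_regPowerField_le hq hμ hμm.le (le_max_left _ _))
        (norm_regPowerField_le hq hμ hμm.le (le_max_right _ _))
    _ = 4 * m * (μ ^ 2 + m ^ 2) ^ q := by ring
    _ ≤ 4 * (2 * ‖ξ - η‖) * (2 ^ |q| * S ^ q) := by gcongr
    _ = 8 * 2 ^ |q| * S ^ q * ‖ξ - η‖ := by ring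

theorem norm_regPowerField_sub_le (hμ : 0 < μ) (hq : -1 / 2 ≤ q) (ξ η : E) :
    ‖regPowerField μ q ξ - regPowerField μ q η‖ ≤
      (8 + 2 * |q|) * 8 ^ |q| * (μ ^ 2 + ‖ξ‖ ^ 2 + ‖η‖ ^ 2) ^ q * ‖ξ - η‖ := by
  by_cases hclose : 2 * ‖ξ - η‖ ≤ max ‖ξ‖ ‖η‖ ∨ max ‖ξ‖ ‖η‖ ≤ μ
  · refine (norm_regPowerField_sub_le_of_close hμ hclose).trans ?_
    simp only [mul_assoc]
    gcongr
    linarith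
  · push Not at hclose
    refine (norm_regPowerField_sub_le_of_far hq hμ hclose.1 hclose.2).trans ?_
    have hS : 0 ≤ (μ ^ 2 + ‖ξ‖ ^ 2 + ‖η‖ ^ 2) ^ q * ‖ξ - η‖ := by positivity
    simp only [mul_assoc]
    refine mul_le_mul (by linarith [abs_nonneg q]) (mul_le_mul_of_nonneg_right
      (Real.rpow_le_rpow (by norm_num) (by norm_num) (abs_nonneg q)) hS) (by positivity)
      (by positivity)

end

theorem stmt_3_general (p μ : ℝ) (hp : 1 < p) (hμ₀ : 0 < μ) :
    ∃ C : ℝ, 0 < C ∧ ∀ (n : ℕ) (ξ η : EuclideanSpace ℝ (Fin n)),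
      ‖((μ ^ 2 + ‖ξ‖ ^ 2) ^ ((p - 2) / 2)) • ξ - ((μ ^ 2 + ‖η‖ ^ 2) ^ ((p - 2) / 2)) • η‖
        ≤ C * (μ ^ 2 + ‖ξ‖ ^ 2 + ‖η‖ ^ 2) ^ ((p - 2) / 2) * ‖ξ - η‖ :=
  ⟨(8 + 2 * |(p - 2) / 2|) * 8 ^ |(p - 2) / 2|, by positivity,
    fun _ ξ η => norm_regPowerField_sub_le hμ₀ (by linarith) ξ η⟩

theorem stmt_3 (p μ : ℝ) (hp : 1 < p) (hμ₀ : 0 < μ) (hμ₁ : μ ≤ 1) :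
    ∃ C : ℝ, 0 < C ∧ ∀ (n : ℕ) (ξ η : EuclideanSpace ℝ (Fin n)),
      ‖((μ ^ 2 + ‖ξ‖ ^ 2) ^ ((p - 2) / 2)) • ξ - ((μ ^ 2 + ‖η‖ ^ 2) ^ ((p - 2) / 2)) • η‖
        ≤ C * (μ ^ 2 + ‖ξ‖ ^ 2 + ‖η‖ ^ 2) ^ ((p - 2) / 2) * ‖ξ - η‖ :=
  stmt_3_general p μ hp hμ₀
end

section
/- Let 0 < θ < 1 and μ > 0. Suppose v : [0, ∞) → [0, ∞) is continuous and satisfies v(t₂) − v(t₁) ≤ −μ·∫_{t₁}^{t₂} v(τ)^θ dτ for all 0 ≤ t₁ < t₂. Then for all t ≥ 0, v(t) ≤ v(0)·[1 − μ(1-θ)·v(0)^{θ-1}·t]_+^{1/(1-θ)} (interpreted as v(t) = 0 when v(0) = 0). In particular v(t) = 0 for all t ≥ v(0)^{1-θ}/(μ(1-θ)). -/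
/-!
The barrier `w(t) = (A - k t) ^ (1 / (1 - θ))` solves `w' = -(k / (1 - θ)) w ^ θ`. For
`k < μ (1 - θ)`, wherever `v` touches `w` the integral inequality makes the upper right Dini
derivative of `v` at most `-μ v ^ θ < w'`, so the fencing theorem for Dini derivatives keeps
`v ≤ w` while `w > 0`. Starting the barrier slightly above `max (v(0) ^ (1 - θ)) (k t)`, so
that it is still positive at `t`, and letting `k ↑ μ (1 - θ)` gives
`v(t) ≤ [v(0) ^ (1 - θ) - μ (1 - θ) t]₊ ^ (1 / (1 - θ))`.
-/

open Set Filter Topology intervalIntegral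

lemma frequently_slope_lt_of_sub_le_integral {v g : ℝ → ℝ} {x : ℝ} (hg : ContinuousOn g (Ici x))
    (hv : ∀ z, x < z → v z - v x ≤ ∫ τ in x..z, g τ) {r : ℝ} (hr : g x < r) :
    ∃ᶠ z in 𝓝[>] x, slope v x z < r := by
  have hG : HasDerivWithinAt (fun z => ∫ τ in x..z, g τ) (g x) (Ici x) x :=
    integral_hasDerivWithinAt_right (t := Ioi x) IntervalIntegrable.refl
      ((hg.mono Ioi_subset_Ici_self).stronglyMeasurableAtFilter_nhdsWithin measurableSet_Ioi x)
      ((hg x self_mem_Ici).mono Ioi_subset_Ici_self)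
  have hslope := (hasDerivWithinAt_iff_tendsto_slope' self_notMem_Ioi).1
    (hG.mono Ioi_subset_Ici_self)
  refine Eventually.frequently ?_
  filter_upwards [hslope (Iio_mem_nhds hr), self_mem_nhdsWithin] with z hz hxz
  refine lt_of_le_of_lt ?_ hz
  rw [slope_def_field, slope_def_field, integral_same, sub_zero]
  exact div_le_div_of_nonneg_right (hv z hxz) (sub_pos.2 hxz).le

lemma le_rpow_of_decay {θ μ A k t : ℝ} {v : ℝ → ℝ} (hθ₀ : 0 ≤ θ) (hθ₁ : θ < 1)
    (hcont : ContinuousOn v (Ici 0))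
    (hdecay : ∀ t₁ t₂, 0 ≤ t₁ → t₁ < t₂ → v t₂ - v t₁ ≤ -μ * ∫ τ in t₁..t₂, v τ ^ θ)
    (hA : v 0 ≤ A ^ (1 / (1 - θ))) (hk₀ : 0 ≤ k) (hk : k < μ * (1 - θ)) (ht : 0 ≤ t)
    (hkt : k * t < A) :
    v t ≤ (A - k * t) ^ (1 / (1 - θ)) := by
  set p := 1 / (1 - θ)
  have hθ' : 0 < 1 - θ := by linarith
  have hθp : p * θ = p - 1 := by simp only [p]; field_simp; ring
  have hkp : k * p < μ := by rw [mul_one_div, div_lt_iff₀ hθ']; exact hk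
  have hbase : ∀ x ∈ Icc 0 t, 0 < A - k * x := fun x hx => by
    nlinarith [mul_le_mul_of_nonneg_left hx.2 hk₀]
  have hB : ∀ x ∈ Icc 0 t, HasDerivAt (fun y => (A - k * y) ^ p)
      (-k * p * (A - k * x) ^ (p - 1)) x := fun x hx => by
    simpa using ((hasDerivAt_id x).const_mul k).const_sub A |>.rpow_const (Or.inl (hbase x hx).ne')
  refine image_le_of_liminf_slope_right_lt_deriv_boundary' (f' := fun x => -μ * v x ^ θ)
    (hcont.mono Icc_subset_Ici_self) (fun x hx r hr => ?_) (by simpa using hA)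
    (fun x hx => (hB x hx).continuousAt.continuousWithinAt)
    (fun x hx => (hB x (Ico_subset_Icc_self hx)).hasDerivWithinAt) (fun x hx hvx => ?_) ⟨ht, le_rfl⟩
  · refine frequently_slope_lt_of_sub_le_integral (g := fun τ => -μ * v τ ^ θ) ?_
      (fun z hz => ?_) hr
    · exact ((hcont.mono (Ici_subset_Ici.2 hx.1)).rpow_const fun _ _ => Or.inr hθ₀).const_smul (-μ)
    · rw [integral_const_mul]; exact hdecay x z hx.1 hz
  · have hpos := hbase x (Ico_subset_Icc_self hx)
    have hvθ : v x ^ θ = (A - k * x) ^ (p - 1) := by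
      rw [hvx, ← Real.rpow_mul hpos.le, hθp]
    rw [hvθ]
    have := mul_lt_mul_of_pos_right hkp (Real.rpow_pos_of_pos hpos (p - 1))
    linarith

lemma le_max_sub_rpow_of_decay {θ μ A t : ℝ} {v : ℝ → ℝ} (hθ₀ : 0 ≤ θ) (hθ₁ : θ < 1)
    (hμ : 0 < μ) (hcont : ContinuousOn v (Ici 0))
    (hdecay : ∀ t₁ t₂, 0 ≤ t₁ → t₁ < t₂ → v t₂ - v t₁ ≤ -μ * ∫ τ in t₁..t₂, v τ ^ θ)
    (hA₀ : 0 ≤ A) (hA : v 0 ≤ A ^ (1 / (1 - θ))) (ht : 0 ≤ t) :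
    v t ≤ max (A - μ * (1 - θ) * t) 0 ^ (1 / (1 - θ)) := by
  set p := 1 / (1 - θ)
  set κ := μ * (1 - θ)
  have hp : 0 < p := one_div_pos.2 (sub_pos.2 hθ₁)
  have hκ : 0 < κ := mul_pos hμ (sub_pos.2 hθ₁)
  set F : ℝ → ℝ := fun ε => (max A ((κ - ε) * t) + ε - (κ - ε) * t) ^ p
  have hF : ∀ ε ∈ Ioo 0 κ, v t ≤ F ε := fun ε hε =>
    le_rpow_of_decay hθ₀ hθ₁ hcont hdecay
      (hA.trans (Real.rpow_le_rpow hA₀ (by linarith [le_max_left A ((κ - ε) * t), hε.1]) hp.le))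
      (by linarith [hε.2]) (by linarith [hε.1]) ht
      (by linarith [le_max_right A ((κ - ε) * t), hε.1])
  have hF0 : F 0 = max (A - κ * t) 0 ^ p := by
    simp only [F, sub_zero, add_zero, ← max_sub_sub_right, sub_self]
  have hFcont : Continuous F := (Real.continuous_rpow_const hp.le).comp (by fun_prop)
  rw [← hF0]
  exact ge_of_tendsto (hFcont.tendsto 0 |>.mono_left nhdsWithin_le_nhds)
    (eventually_of_mem (Ioo_mem_nhdsGT hκ) hF)

lemma max_rpow_sub_rpow_eq_mul {x θ c t : ℝ} (hx : 0 ≤ x) (hθ : θ < 1) (hc : 0 ≤ c) (ht : 0 ≤ t) :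
    max (x ^ (1 - θ) - c * t) 0 ^ (1 / (1 - θ)) =
      x * max (1 - c * x ^ (θ - 1) * t) 0 ^ (1 / (1 - θ)) := by
  have hθ' : 1 - θ ≠ 0 := (sub_pos.2 hθ).ne'
  rcases hx.eq_or_lt with rfl | hx
  · rw [Real.zero_rpow hθ', zero_sub, max_eq_right (neg_nonpos.2 (mul_nonneg hc ht)),
      Real.zero_rpow (one_div_ne_zero hθ'), zero_mul]
  · have hinv : x ^ (1 - θ) * x ^ (θ - 1) = 1 := by
      rw [← Real.rpow_add hx]; norm_num
    have hxθ := Real.rpow_pos_of_pos hx (1 - θ)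
    rw [show x ^ (1 - θ) - c * t = x ^ (1 - θ) * (1 - c * x ^ (θ - 1) * t) by
        linear_combination c * t * hinv,
      ← mul_zero (x ^ (1 - θ)), ← mul_max_of_nonneg _ _ hxθ.le,
      Real.mul_rpow hxθ.le (le_max_right _ _), one_div, Real.rpow_rpow_inv hx.le hθ', mul_zero]

theorem stmt_19 (θ μ : ℝ) (hθ₀ : 0 < θ) (hθ₁ : θ < 1) (hμ : 0 < μ)
    (v : ℝ → ℝ) (hcont : ContinuousOn v (Set.Ici 0))
    (hnonneg : ∀ t, 0 ≤ t → 0 ≤ v t)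
    (hdecay : ∀ t₁ t₂, 0 ≤ t₁ → t₁ < t₂ →
      v t₂ - v t₁ ≤ -μ * ∫ τ in t₁..t₂, v τ ^ θ) :
    (∀ t, 0 ≤ t →
      v t ≤ v 0 * max (1 - μ * (1 - θ) * v 0 ^ (θ - 1) * t) 0 ^ (1 / (1 - θ))) ∧
    (∀ t, v 0 ^ (1 - θ) / (μ * (1 - θ)) ≤ t → v t = 0) := by
  have hv₀ := hnonneg 0 le_rfl
  have hθ' : 0 < 1 - θ := sub_pos.2 hθ₁
  have hbound : ∀ t, 0 ≤ t → v t ≤ max (v 0 ^ (1 - θ) - μ * (1 - θ) * t) 0 ^ (1 / (1 - θ)) :=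
    fun t ht => le_max_sub_rpow_of_decay hθ₀.le hθ₁ hμ hcont hdecay
      (Real.rpow_nonneg hv₀ _) (by rw [one_div, Real.rpow_rpow_inv hv₀ hθ'.ne']) ht
  refine ⟨fun t ht => ?_, fun t ht => ?_⟩
  · rw [← max_rpow_sub_rpow_eq_mul hv₀ hθ₁ (mul_nonneg hμ.le hθ'.le) ht]
    exact hbound t ht
  · have ht₀ : 0 ≤ t := (div_nonneg (Real.rpow_nonneg hv₀ _) (by positivity)).trans ht
    have hκt : v 0 ^ (1 - θ) ≤ μ * (1 - θ) * t := (div_le_iff₀' (by positivity)).1 ht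
    refine le_antisymm ?_ (hnonneg t ht₀)
    simpa only [max_eq_right (sub_nonpos.2 hκt), Real.zero_rpow (one_div_ne_zero hθ'.ne')]
      using hbound t ht₀
end
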